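/- arXiv:2406.07240 — 4 statements merged into one kernel-verified Lean document; each statement's English description precedes it below -/
import Mathlib

section
/- Let D be a negative integer with D ≡ 1 (mod 4), β a positive odd integer, d = gcd(D, β²), and τ = (β + √D)/(2β). Then the multiplier ring O_τ = {u ∈ ℂ : u·(ℤτ + ℤ) ⊆ ℤτ + ℤ} equals ℤ + ℤ·(β/d)·((β + √D)/2). -/
open Complex

/-- for D < 0, D ≡ 1 (mod 4), β a positive odd integer,
d = gcd(D, β²), and τ = (β+√D)/(2β), the multiplier ring of ℤτ + ℤ equals
ℤ + ℤ·(β/d)·((β+√D)/2). -/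
theorem stmt_6 (D β : ℤ) (hneg : D < 0) (hD : D % 4 = 1)
    (hβ : 0 < β) (hodd : Odd β) (d : ℤ) (hd : d = Int.gcd D (β ^ 2))
    (sqrtD τ : ℂ) (hs : sqrtD = Real.sqrt (|D| : ℤ) * Complex.I)
    (hτ : τ = ((β : ℂ) + sqrtD) / (2 * β)) :
    {u : ℂ | ∀ z ∈ Submodule.span ℤ ({τ, 1} : Set ℂ),
        u * z ∈ Submodule.span ℤ ({τ, 1} : Set ℂ)}
      = (Submodule.span ℤ
          ({1, ((β : ℂ) / (d : ℂ)) * (((β : ℂ) + sqrtD) / 2)} : Set ℂ) : Set ℂ) := by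
  -- basic nonzero facts
  have hβ0 : (β : ℂ) ≠ 0 := by exact_mod_cast (by positivity : (β:ℤ) ≠ 0)
  have hDne : D ≠ 0 := by omega
  have hdpos : 0 < d := by
    rw [hd]; exact_mod_cast Int.gcd_pos_of_ne_zero_left _ hDne
  have hd0 : (d : ℂ) ≠ 0 := by exact_mod_cast (by positivity : (d:ℤ) ≠ 0)
  -- sqrtD squared
  have hsq : sqrtD ^ 2 = (D : ℂ) := by
    rw [hs]
    have h1 : ((|D| : ℤ) : ℝ) = -(D : ℝ) := by push_cast; rw [abs_of_neg]; exact_mod_cast hneg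
    have h2 : (0:ℝ) ≤ ((|D| : ℤ) : ℝ) := by positivity
    rw [mul_pow, I_sq]
    rw [show ((Real.sqrt (|D|:ℤ) : ℂ))^2 = ((Real.sqrt (|D|:ℤ)^2 : ℝ) : ℂ) by push_cast; ring]
    rw [Real.sq_sqrt h2, h1]; push_cast; ring
  -- imaginary part of τ
  have hτim : τ.im ≠ 0 := by
    have hr : (0:ℝ) < Real.sqrt (|D|:ℤ) := Real.sqrt_pos.mpr (by positivity)
    have : τ.im = Real.sqrt (|D|:ℤ) / (2*β) := by
      rw [hτ, hs, show (2 * (β:ℂ)) = (((2*β : ℤ):ℝ) : ℂ) by push_cast; ring,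
        Complex.div_ofReal_im]
      push_cast; simp
    rw [this]
    have hb : (0:ℝ) < 2*(β:ℝ) := by positivity
    positivity
  -- integer facts
  have hdD : d ∣ D := hd ▸ Int.gcd_dvd_left D (β^2)
  have hdβ2 : d ∣ β^2 := hd ▸ Int.gcd_dvd_right D (β^2)
  have h4 : (4:ℤ) ∣ β^2 - D := by
    obtain ⟨k, hk⟩ := hodd
    refine ⟨k^2 + k - D/4, ?_⟩
    have hD4 : D = 4*(D/4) + 1 := by omega
    subst hk; ring_nf; linarith [hD4]
  obtain ⟨e, he⟩ := h4
  have hdodd : Odd d := by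
    rcases Int.even_or_odd d with hev | h
    · exfalso; have : (2:ℤ) ∣ β^2 := dvd_trans hev.two_dvd hdβ2
      have := (hodd.pow (n := 2))
      rw [← Int.not_even_iff_odd] at this; exact this (even_iff_two_dvd.mpr ‹_›)
    · exact h
  have hcop4 : IsCoprime (d:ℤ) 4 := by
    have h2 : IsCoprime (d:ℤ) 2 := by
      rw [isCoprime_comm, Int.prime_two.coprime_iff_not_dvd]
      rw [← Int.not_even_iff_odd, even_iff_two_dvd] at hdodd; exact hdodd
    have := h2.mul_right h2
    simpa using this
  have hde : d ∣ e := by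
    have h1 : d ∣ 4 * e := he ▸ dvd_sub hdβ2 hdD
    exact hcop4.dvd_of_dvd_mul_right (by rwa [mul_comm] at h1)
  obtain ⟨f, hf⟩ := hde
  obtain ⟨m, hm⟩ := hdβ2
  -- gcd(β², e) = d, hence coprime m f
  have hgcd : (Int.gcd (β^2) e : ℤ) = d := by
    have hA : (Int.gcd (β^2) e : ℤ) ∣ d := by
      have h1 : (Int.gcd (β^2) e : ℤ) ∣ 4*e := Dvd.dvd.mul_left (Int.gcd_dvd_right _ _) 4
      have h2 : (Int.gcd (β^2) e : ℤ) ∣ β^2 := Int.gcd_dvd_left _ _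
      have h3 : (Int.gcd (β^2) e : ℤ) ∣ D := (by omega : D = β^2 - 4*e) ▸ dvd_sub h2 h1
      exact hd ▸ Int.dvd_coe_gcd h3 h2
    have hB : d ∣ (Int.gcd (β^2) e : ℤ) := Int.dvd_coe_gcd (hm ▸ Dvd.intro m rfl) (hf ▸ Dvd.intro f rfl)
    exact Int.dvd_antisymm (by positivity) hdpos.le hA hB
  have hcopmf : IsCoprime m f := by
    rw [Int.isCoprime_iff_gcd_eq_one]
    have h1 : Int.gcd (d*m) (d*f) = d.natAbs * Int.gcd m f := Int.gcd_mul_left d m f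
    rw [← hm, ← hf] at h1
    have h2' : ((d.natAbs * Int.gcd m f : ℕ) : ℤ) = d := by rw [← h1]; exact hgcd
    have h2 : (d.natAbs : ℤ) * (Int.gcd m f : ℤ) = d := by exact_mod_cast h2'
    have hd' : (d.natAbs : ℤ) = d := Int.natAbs_of_nonneg hdpos.le
    rw [hd'] at h2
    have : (Int.gcd m f : ℤ) = 1 := by
      have := mul_left_cancel₀ (by positivity : d ≠ 0) (h2.trans (mul_one d).symm)
      exact this
    exact_mod_cast this
  -- cast versions
  have hmc : (β:ℂ)^2 = (d:ℂ) * m := by exact_mod_cast congrArg (Int.cast : ℤ → ℂ) hm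
  have hec : (β:ℂ)^2 - (D:ℂ) = 4 * e := by exact_mod_cast congrArg (Int.cast : ℤ → ℂ) he
  have hfc : (e:ℂ) = (d:ℂ) * f := by exact_mod_cast congrArg (Int.cast : ℤ → ℂ) hf
  have hw : ((β : ℂ) / (d : ℂ)) * (((β : ℂ) + sqrtD) / 2) = (m:ℂ) * τ := by
    rw [hτ]; field_simp; linear_combination (((β:ℂ) + sqrtD)) * hmc
  have hwτ : (((β : ℂ) / (d : ℂ)) * (((β : ℂ) + sqrtD) / 2)) * τ
      = (m:ℂ) * τ - (f:ℂ) := by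
    rw [hτ]; field_simp
    linear_combination (β:ℂ)*hsq + (-(β:ℂ))*hec +
      (2*(β:ℂ) + 2*sqrtD)*hmc + (-4*(β:ℂ))*hfc
  have hτmem : τ ∈ Submodule.span ℤ ({τ, 1} : Set ℂ) :=
    Submodule.subset_span (by simp)
  have h1mem : (1:ℂ) ∈ Submodule.span ℤ ({τ, 1} : Set ℂ) :=
    Submodule.subset_span (by simp)
  ext u
  simp only [Set.mem_setOf_eq, SetLike.mem_coe]
  constructor
  · intro hu
    obtain ⟨a, b, hab⟩ := Submodule.mem_span_pair.mp (hu 1 h1mem)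
    obtain ⟨p, q, hpq⟩ := Submodule.mem_span_pair.mp (hu τ hτmem)
    simp only [zsmul_eq_mul, mul_one, smul_eq_mul] at hab hpq
    -- hab : a * τ + b = u,  hpq : p * τ + q = u * τ
    have key : (((a+b-p)*β^2 : ℤ) : ℂ) * τ = (((q*β^2 + a*e : ℤ)) : ℂ) := by
      push_cast
      rw [hτ] at hab hpq ⊢
      field_simp at hab hpq ⊢
      linear_combination (((β:ℂ)+sqrtD)/2)*hab - (β:ℂ)*hpq
        - ((a:ℂ)/2)*hsq + ((a:ℂ)/2)*hec
    have him : ((((a+b-p)*β^2 : ℤ)):ℝ) * τ.im = 0 := by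
      have h := congrArg Complex.im key
      simp only [Complex.mul_im, Complex.intCast_re, Complex.intCast_im, zero_mul,
        mul_zero, add_zero, zero_add] at h
      exact h
    have hM : ((a+b-p)*β^2 : ℤ) = 0 := by
      exact_mod_cast (mul_eq_zero.mp him).resolve_right hτim
    have hab0 : a + b - p = 0 := by
      have hb2 : (β:ℤ)^2 ≠ 0 := by positivity
      exact (mul_eq_zero.mp hM).resolve_right hb2
    have hN : q*β^2 + a*e = 0 := by
      rw [hM] at key
      have : (((q*β^2 + a*e : ℤ)) : ℂ) = 0 := by rw [← key]; simp
      exact_mod_cast this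
    have hmaf : m ∣ a * f := by
      refine ⟨-q, mul_left_cancel₀ (by positivity : d ≠ 0) ?_⟩
      linear_combination (-a)*hf + (-q)*hm + hN
    have hma : m ∣ a := hcopmf.dvd_of_dvd_mul_right hmaf
    obtain ⟨k, hk⟩ := hma
    refine Submodule.mem_span_pair.mpr ⟨b, k, ?_⟩
    simp only [zsmul_eq_mul, mul_one, smul_eq_mul]
    have hkc : (a:ℂ) = (m:ℂ)*(k:ℂ) := by exact_mod_cast congrArg (Int.cast : ℤ → ℂ) hk
    rw [← hab]
    linear_combination (k:ℂ) * hw - τ * hkc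
  · intro hu z hz
    obtain ⟨n, k, hnk⟩ := Submodule.mem_span_pair.mp hu
    simp only [zsmul_eq_mul, mul_one, smul_eq_mul] at hnk
    obtain ⟨p, q, hpq⟩ := Submodule.mem_span_pair.mp hz
    simp only [zsmul_eq_mul, mul_one, smul_eq_mul] at hpq
    have huτ : u * τ ∈ Submodule.span ℤ ({τ, 1} : Set ℂ) := by
      refine Submodule.mem_span_pair.mpr ⟨n + k*m, -(k*f), ?_⟩
      simp only [zsmul_eq_mul, mul_one, smul_eq_mul]
      rw [← hnk]; push_cast
      linear_combination (-(k:ℂ)) * hwτ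
    have hu1 : u ∈ Submodule.span ℤ ({τ, 1} : Set ℂ) := by
      refine Submodule.mem_span_pair.mpr ⟨k*m, n, ?_⟩
      simp only [zsmul_eq_mul, mul_one, smul_eq_mul]
      rw [← hnk]; push_cast
      linear_combination (-(k:ℂ)) * hw
    have huz : u * z = p • (u * τ) + q • u := by
      rw [← hpq]; push_cast [zsmul_eq_mul]; ring
    rw [huz]
    exact Submodule.add_mem _ (Submodule.smul_mem _ p huτ) (Submodule.smul_mem _ q hu1)
end

section
/- Let D be a negative integer with D ≡ 1 (mod 4), β a positive odd integer, d = gcd(D, β²), and τ = (β + √D)/(2β). Then (1 + √D)/2 lies in the multiplier ring O_τ of the lattice ℤτ + ℤ if and only if β divides D. -/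
open Complex

/-- for D < 0, D ≡ 1 (mod 4), β a positive odd integer and
τ = (β+√D)/(2β), the element (1+√D)/2 lies in the multiplier ring of ℤτ + ℤ
iff β divides D. -/
theorem stmt_7 (D β : ℤ) (hneg : D < 0) (hD : D % 4 = 1)
    (hβ : 0 < β) (hodd : Odd β)
    (sqrtD τ : ℂ) (hs : sqrtD = Real.sqrt (|D| : ℤ) * Complex.I)
    (hτ : τ = ((β : ℂ) + sqrtD) / (2 * β)) :
    ((1 + sqrtD) / 2 ∈ {u : ℂ | ∀ z ∈ Submodule.span ℤ ({τ, 1} : Set ℂ),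
        u * z ∈ Submodule.span ℤ ({τ, 1} : Set ℂ)}) ↔ β ∣ D := by
  obtain ⟨k, hk⟩ := hodd
  have hβ0 : (β : ℂ) ≠ 0 := by exact_mod_cast hβ.ne'
  have habs : (|D| : ℤ) = -D := abs_of_neg hneg
  have hs0 : Real.sqrt (|D| : ℤ) ≠ 0 := by
    rw [Real.sqrt_ne_zero']
    exact_mod_cast (by omega : (0:ℤ) < |D|)
  have hs2 : sqrtD ^ 2 = (D : ℂ) := by
    rw [hs]
    have h1 : ((Real.sqrt ((|D| : ℤ) : ℝ) : ℂ))^2 = (((|D| : ℤ) : ℝ) : ℂ) := by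
      norm_cast
      exact_mod_cast Real.sq_sqrt (by positivity)
    rw [mul_pow, Complex.I_sq, h1, habs]
    push_cast; ring
  constructor
  · intro hmem
    have hτmem : τ ∈ Submodule.span ℤ ({τ, 1} : Set ℂ) :=
      Submodule.subset_span (Set.mem_insert _ _)
    have h := hmem τ hτmem
    rw [Submodule.mem_span_pair] at h
    obtain ⟨a, b, hab⟩ := h
    simp only [zsmul_eq_mul, mul_one] at hab
    rw [hτ] at hab
    field_simp at hab
    have h2β : (2 * (β:ℂ)) ≠ 0 := by simp [hβ0]
    have heq : ((2*a - 1 - β : ℤ) : ℂ) * sqrtD = ((β + D - 2*a*β - 4*b*β : ℤ) : ℂ) := by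
      have heq2 : ((2*a - 1 - β : ℤ) : ℂ) * sqrtD * (2*β)
          = ((β + D - 2*a*β - 4*b*β : ℤ) : ℂ) * (2*β) := by
        push_cast
        linear_combination 2*(β:ℂ)*hab + 2*(β:ℂ)*hs2
      exact mul_right_cancel₀ h2β heq2
    rw [hs] at heq
    rw [Complex.ext_iff] at heq
    simp at heq
    obtain ⟨hre, _⟩ := heq
    have h2 : β + D - 2*a*β - 4*b*β = 0 := by
      have h3 : ((β + D - 2*a*β - 4*b*β : ℤ) : ℝ) = 0 := by rw [Int.cast_sub, Int.cast_sub]; push_cast at hre ⊢; linarith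
      exact_mod_cast h3
    exact ⟨2*a + 4*b - 1, by linear_combination h2⟩
  · intro hdvd
    obtain ⟨c, hc⟩ := hdvd
    have hd1 : (4:ℤ) ∣ D - 1 := by omega
    obtain ⟨t, ht⟩ := hd1
    have h1 : (4:ℤ) ∣ β * (c - β) :=
      ⟨t - (k*k + k), by linear_combination -hc + ht + (-β - 2*k - 1) * hk⟩
    have h2cop : IsCoprime (2:ℤ) β :=
      (Int.prime_two.coprime_iff_not_dvd).mpr (by omega)
    have hcop : IsCoprime (4:ℤ) β := by
      rw [show (4:ℤ) = 2*2 by norm_num]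
      exact h2cop.mul_left h2cop
    obtain ⟨m, hm⟩ := hcop.dvd_of_dvd_mul_left h1
    have hcC : (D:ℂ) = (β:ℂ) * c := by exact_mod_cast hc
    have hmC : (c:ℂ) - β = 4*m := by exact_mod_cast hm
    have hkC : (β:ℂ) = 2*k+1 := by exact_mod_cast hk
    intro z hz
    refine Submodule.span_induction ?_ ?_ ?_ ?_ hz
    · intro x hx
      simp only [Set.mem_insert_iff, Set.mem_singleton_iff] at hx
      rcases hx with rfl | rfl
      · rw [Submodule.mem_span_pair]
        refine ⟨k+1, m, ?_⟩
        simp only [zsmul_eq_mul, mul_one]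
        rw [hτ]
        field_simp
        push_cast
        linear_combination (-1:ℂ)*hs2 + (-1:ℂ)*hcC + (-(β:ℂ))*hmC
          + (-(β:ℂ) - sqrtD)*hkC
      · rw [Submodule.mem_span_pair]
        refine ⟨β, -k, ?_⟩
        simp only [zsmul_eq_mul, mul_one]
        rw [hτ]
        field_simp
        push_cast
        linear_combination hkC
    · simp
    · intro x y _ _ hx hy
      rw [mul_add]; exact Submodule.add_mem _ hx hy
    · intro g x _ hx
      have h : (1 + sqrtD)/2 * (g • x) = g • ((1+sqrtD)/2 * x) := by
        rw [zsmul_eq_mul, zsmul_eq_mul]; ring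
      rw [h]; exact Submodule.smul_mem _ _ hx
end

section
/- Let D be a negative integer with D ≡ 1 (mod 4) and β a positive divisor of D. Set τ = 1/2 + √D/(2β). Then the multiplier ring O_τ of ℤτ + ℤ equals ℤ + ℤ·(1+√D)/2 if and only if β and D/β are coprime. -/
open Complex

/-- for D < 0, D ≡ 1 (mod 4), β a positive divisor of D and
τ = 1/2 + √D/(2β), the multiplier ring of ℤτ + ℤ equals ℤ + ℤ·(1+√D)/2
iff β and D/β are coprime. -/
theorem stmt_8 (D β : ℤ) (hneg : D < 0) (hD : D % 4 = 1)
    (hβ : 0 < β) (hdvd : β ∣ D)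
    (sqrtD τ : ℂ) (hs : sqrtD = Real.sqrt (|D| : ℤ) * Complex.I)
    (hτ : τ = 1 / 2 + sqrtD / (2 * β)) :
    ({u : ℂ | ∀ z ∈ Submodule.span ℤ ({τ, 1} : Set ℂ),
        u * z ∈ Submodule.span ℤ ({τ, 1} : Set ℂ)}
      = (Submodule.span ℤ ({1, (1 + sqrtD) / 2} : Set ℂ) : Set ℂ))
    ↔ IsCoprime β (D / β) := by
  obtain ⟨β', hβ'⟩ := hdvd
  have hβ0 : β ≠ 0 := hβ.ne'
  have hDβ : D / β = β' := by rw [hβ', Int.mul_ediv_cancel_left _ hβ0]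
  have hβodd : β % 2 = 1 := by
    rcases Int.even_or_odd β with he | ho
    · exfalso
      have : Even D := by rw [hβ']; exact he.mul_right β'
      rw [Int.even_iff] at this; omega
    · rw [Int.odd_iff] at ho; omega
  have hβ'odd : β' % 2 = 1 := by
    rcases Int.even_or_odd β' with he | ho
    · exfalso
      have : Even D := by rw [hβ']; exact he.mul_left β
      rw [Int.even_iff] at this; omega
    · rw [Int.odd_iff] at ho; omega
  have hmod : (β % 4) * (β' % 4) % 4 = 1 := by
    rw [← Int.mul_emod, ← hβ', hD]
  have hb4 : β % 4 = 1 ∨ β % 4 = 3 := by omega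
  have hb'4 : β' % 4 = 1 ∨ β' % 4 = 3 := by omega
  have h4 : (4:ℤ) ∣ β - β' := by
    rcases hb4 with h|h <;> rcases hb'4 with h'|h' <;> rw [h, h'] at hmod <;> omega
  obtain ⟨k, hk⟩ := h4
  obtain ⟨e, he⟩ : ∃ e, β = 2*e+1 := ⟨(β-1)/2, by omega⟩
  -- complex facts
  have hβC : (β:ℂ) ≠ 0 := Int.cast_ne_zero.2 hβ0
  have hs2 : sqrtD ^ 2 = (D : ℂ) := by
    have hx0 : (0:ℝ) ≤ ((|D| : ℤ) : ℝ) := by positivity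
    rw [hs, mul_pow, Complex.I_sq, ← Complex.ofReal_pow, Real.sq_sqrt hx0]
    rw [abs_of_neg hneg]
    push_cast
    ring
  have hDC : (D:ℂ) = (β:ℂ) * (β':ℂ) := by exact_mod_cast congrArg (Int.cast : ℤ → ℂ) hβ'
  have hkC : ((β:ℂ) - β') = 4 * k := by exact_mod_cast congrArg (Int.cast : ℤ → ℂ) hk
  have heC : (β:ℂ) = 2*(e:ℂ)+1 := by exact_mod_cast congrArg (Int.cast : ℤ → ℂ) he
  have h2βτ : 2 * (β:ℂ) * τ = β + sqrtD := by
    rw [hτ]; field_simp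
  have hτ2' : (β:ℂ) * τ^2 = (β:ℂ) * τ - (k:ℂ) := by
    have h4β : (4:ℂ) * β ≠ 0 := by simp [hβC]
    apply mul_left_cancel₀ h4β
    linear_combination (2*(β:ℂ)*τ + sqrtD - β) * h2βτ + hs2 + hDC - (β:ℂ) * hkC
  have hw1 : (1 + sqrtD)/2 = (β:ℂ)*τ - e := by
    linear_combination -(1/2)*h2βτ - (1/2)*heC
  have hw2 : (1 + sqrtD)/2 * τ = ((e:ℂ)+1)*τ - k := by
    linear_combination τ*hw1 + hτ2' + τ*heC
  -- coordinate extraction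
  have hrpos : (0:ℝ) < Real.sqrt ((|D| : ℤ) : ℝ) :=
    Real.sqrt_pos.2 (by exact_mod_cast abs_pos.2 hneg.ne)
  have huniq : ∀ p q : ℝ, (p:ℂ) + (q:ℂ) * sqrtD = 0 → p = 0 ∧ q = 0 := by
    intro p q hpq
    rw [hs] at hpq
    have him := congrArg Complex.im hpq
    have hre := congrArg Complex.re hpq
    simp at him hre
    rcases him with him | him
    · exact ⟨hre, him⟩
    · exact absurd him hneg.ne
  have hcoordS : ∀ a b : ℤ, (a:ℂ) + (b:ℂ) * sqrtD = 0 → a = 0 ∧ b = 0 := by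
    intro a b hab
    have h2 : ((a:ℝ):ℂ) + ((b:ℝ):ℂ) * sqrtD = 0 := by push_cast; push_cast at hab; exact hab
    obtain ⟨h1, h2⟩ := huniq _ _ h2
    exact ⟨by exact_mod_cast h1, by exact_mod_cast h2⟩
  have hcoordτ : ∀ a b : ℤ, (a:ℂ)*τ + (b:ℂ) = 0 → a = 0 ∧ b = 0 := by
    intro a b hab
    have h2 : ((a*β + 2*b*β : ℤ):ℂ) + ((a : ℤ):ℂ) * sqrtD = 0 := by
      push_cast
      linear_combination 2*(β:ℂ)*hab - (a:ℂ)*h2βτ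
    obtain ⟨h1, h2⟩ := hcoordS _ _ h2
    refine ⟨h2, ?_⟩
    have h1' : b * (2*β) = 0 := by linear_combination h1 - β * h2
    rcases mul_eq_zero.mp h1' with h | h
    · exact h
    · omega
  -- membership characterizations
  have hmemL : ∀ z : ℂ, (z ∈ Submodule.span ℤ ({τ, 1} : Set ℂ)) ↔ ∃ m n : ℤ, z = m*τ + n := by
    intro z
    rw [Submodule.mem_span_pair]
    constructor
    · rintro ⟨m, n, rfl⟩; exact ⟨m, n, by simp [zsmul_eq_mul]⟩
    · rintro ⟨m, n, rfl⟩; exact ⟨m, n, by simp [zsmul_eq_mul]⟩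
  have hmemR : ∀ z : ℂ, (z ∈ Submodule.span ℤ ({1, (1 + sqrtD) / 2} : Set ℂ)) ↔
      ∃ a b : ℤ, z = a + b*((1 + sqrtD)/2) := by
    intro z
    rw [Submodule.mem_span_pair]
    constructor
    · rintro ⟨m, n, rfl⟩; exact ⟨m, n, by simp [zsmul_eq_mul]⟩
    · rintro ⟨m, n, rfl⟩; exact ⟨m, n, by simp [zsmul_eq_mul]⟩
  have hτmem : τ ∈ Submodule.span ℤ ({τ, 1} : Set ℂ) := (hmemL τ).2 ⟨1, 0, by simp⟩
  have h1mem : (1:ℂ) ∈ Submodule.span ℤ ({τ, 1} : Set ℂ) := (hmemL 1).2 ⟨0, 1, by simp⟩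
  have hcop2 : ∀ n : ℤ, n % 2 = 1 → IsCoprime n (2:ℤ) := by
    intro n hn
    exact ⟨1, -(n/2), by omega⟩
  rw [hDβ]
  constructor
  · -- sets equal → coprime
    intro h
    by_contra hnc
    rw [Int.isCoprime_iff_gcd_eq_one] at hnc
    set d : ℤ := (Int.gcd β β' : ℤ) with hd
    have hd0 : d ≠ 0 := by
      simp only [hd, ne_eq, Int.natCast_eq_zero, Int.gcd_eq_zero_iff]
      rintro ⟨h1, -⟩; exact hβ0 h1
    have hd2 : 2 ≤ d := by
      have h1 : (0:ℤ) ≤ d := Int.natCast_nonneg _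
      have h2 : d ≠ 1 := by intro hh; exact hnc (by rw [hd] at hh; exact_mod_cast hh)
      omega
    have hdβ : d ∣ β := Int.gcd_dvd_left β β'
    have hdβ'2 : d ∣ β' := Int.gcd_dvd_right β β'
    obtain ⟨b₁, hb₁⟩ := hdβ
    have hdodd : d % 2 = 1 := by
      rcases Int.even_or_odd d with hev | ho
      · exfalso
        have : Even β := by
          rw [hb₁]; exact hev.mul_right b₁
        rw [Int.even_iff] at this; omega
      · rw [Int.odd_iff] at ho; omega
    have hd4k : d ∣ 4*k := by
      rw [← hk]; exact dvd_sub ⟨b₁, hb₁⟩ hdβ'2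
    have hco4 : IsCoprime d (4:ℤ) := by
      have h2 := hcop2 d hdodd
      have : (4:ℤ) = 2*2 := by norm_num
      rw [this]; exact h2.mul_right h2
    obtain ⟨k₁, hk₁⟩ := hco4.dvd_of_dvd_mul_left hd4k
    have hb₁C : (β:ℂ) = (d:ℂ) * b₁ := by exact_mod_cast congrArg (Int.cast : ℤ → ℂ) hb₁
    have hk₁C : (k:ℂ) = (d:ℂ) * k₁ := by exact_mod_cast congrArg (Int.cast : ℤ → ℂ) hk₁
    have hdC : (d:ℂ) ≠ 0 := Int.cast_ne_zero.2 hd0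
    have hu₀ : ((b₁:ℂ)*τ) ∈ {u : ℂ | ∀ z ∈ Submodule.span ℤ ({τ, 1} : Set ℂ),
        u * z ∈ Submodule.span ℤ ({τ, 1} : Set ℂ)} := by
      intro z hz
      obtain ⟨m, n, rfl⟩ := (hmemL z).1 hz
      refine (hmemL _).2 ⟨b₁*(m+n), -(m*k₁), ?_⟩
      apply mul_left_cancel₀ hdC
      push_cast
      linear_combination (m:ℂ)*hτ2' - ((m:ℂ)*τ^2 - (m:ℂ)*τ)*hb₁C - (m:ℂ)*hk₁C
    rw [h] at hu₀
    obtain ⟨a, b, hab⟩ := (hmemR _).1 hu₀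
    have hQ : ((2*β*a + β*b - β*b₁ : ℤ):ℂ) + ((β*b - b₁ : ℤ):ℂ)*sqrtD = 0 := by
      push_cast
      linear_combination (b₁:ℂ)*h2βτ - 2*(β:ℂ)*hab
    obtain ⟨h1, h2⟩ := hcoordS _ _ hQ
    have hb₁0 : b₁ ≠ 0 := by
      intro hb0; rw [hb0, mul_zero] at hb₁; exact hβ0 hb₁
    have hdb1 : b₁ * (d*b - 1) = 0 := by linear_combination h2 - b*hb₁
    rcases mul_eq_zero.mp hdb1 with hc | hc
    · exact hb₁0 hc
    · have hdvd1 : d ∣ 1 := ⟨b, by omega⟩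
      have := Int.le_of_dvd one_pos hdvd1
      omega
  · -- coprime → sets equal
    intro hco
    have hco4k : IsCoprime β (4*k) := by
      have h1 : IsCoprime β (-β') := hco.neg_right
      have h2 := h1.add_mul_left_right 1
      have h3 : -β' + β*1 = 4*k := by omega
      rwa [h3] at h2
    have hcoβk : IsCoprime β k := hco4k.of_mul_right_right
    ext u
    simp only [Set.mem_setOf_eq, SetLike.mem_coe]
    constructor
    · intro hu
      obtain ⟨m, n, hmn⟩ := (hmemL u).1 (by simpa using hu 1 h1mem)
      obtain ⟨a, b, hab⟩ := (hmemL (u*τ)).1 (hu τ hτmem)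
      have hcc : (((m+n-a)*β : ℤ):ℂ)*τ + ((-(m*k) - β*b : ℤ):ℂ) = 0 := by
        push_cast
        linear_combination (β:ℂ)*hab - (β:ℂ)*τ*hmn - (m:ℂ)*hτ2'
      obtain ⟨hA, hB⟩ := hcoordτ _ _ hcc
      have hβmk : β ∣ m*k := ⟨-b, by linear_combination -hB⟩
      obtain ⟨m₁, hm₁⟩ := hcoβk.dvd_of_dvd_mul_right hβmk
      have hm₁C : (m:ℂ) = (β:ℂ)*m₁ := by exact_mod_cast congrArg (Int.cast : ℤ → ℂ) hm₁
      refine (hmemR u).2 ⟨n + m₁*e, m₁, ?_⟩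
      push_cast
      linear_combination hmn - (m₁:ℂ)*hw1 + τ*hm₁C
    · intro hu
      obtain ⟨a, b, hab⟩ := (hmemR u).1 hu
      intro z hz
      obtain ⟨m, n, rfl⟩ := (hmemL z).1 hz
      refine (hmemL _).2 ⟨a*m + b*m*(e+1) + b*n*β, a*n - b*m*k - b*n*e, ?_⟩
      push_cast
      linear_combination ((m:ℂ)*τ+(n:ℂ))*hab + (b:ℂ)*(m:ℂ)*hw2 + (b:ℂ)*(n:ℂ)*hw1
end

section
/- Let K be a quadratic field and O an order in K. The discriminant of O is odd if and only if Tr_{K/ℚ}(O) = ℤ; equivalently, the discriminant of O is even if and only if Tr_{K/ℚ}(O) = 2ℤ. -/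
lemma zmod_core (m00 m01 m11 c0 c1 : ZMod 2) (hc : ¬(c0 = 0 ∧ c1 = 0))
    (h2 : c0*(c0*m00 + c1*m01) + c1*(c0*m01 + c1*m11) = 0) :
    (m00*m11 - m01*m01 = 0 ↔ (c0*m00 + c1*m01 = 0 ∧ c0*m01 + c1*m11 = 0)) := by
  revert hc h2; revert m00 m01 m11 c0 c1; decide

lemma int_even_iff_cast (n : ℤ) : Even n ↔ (n : ZMod 2) = 0 := by
  rw [even_iff_two_dvd]
  exact (ZMod.intCast_zmod_eq_zero_iff_dvd n 2).symm

lemma int_odd_iff_cast (n : ℤ) : Odd n ↔ (n : ZMod 2) = 1 := by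
  rw [Int.not_even_iff_odd.symm, int_even_iff_cast]
  generalize (n : ZMod 2) = x
  revert x; decide


/-- for an order O (with ℤ-basis b) in a quadratic field K whose
discriminant (det of the Gram matrix of the trace form on b) is d, d is odd
iff Tr(O) = ℤ, and d is even iff Tr(O) = 2ℤ. -/
theorem stmt_12 (K : Type*) [Field K] [Algebra ℚ K] [FiniteDimensional ℚ K]
    (hK : Module.finrank ℚ K = 2)
    (O : Subring K) (hfin : Module.Finite ℤ O)
    (hspan : Submodule.span ℚ (O : Set K) = ⊤)
    (b : Module.Basis (Fin 2) ℤ O) (d : ℤ)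
    (hd : (d : ℚ) = Matrix.det
      (Matrix.of fun i j => Algebra.trace ℚ K (((b i : K)) * ((b j : K))))) :
    (Odd d ↔ (Algebra.trace ℚ K) '' (O : Set K) = Set.range (fun m : ℤ => (m : ℚ))) ∧
    (Even d ↔ (Algebra.trace ℚ K) '' (O : Set K)
        = Set.range (fun m : ℤ => ((2 * m : ℤ) : ℚ))) := by
  classical
  haveI := hfin
  haveI : Algebra.IsIntegral ℤ O := Algebra.IsIntegral.of_finite ℤ O
  have hT1 : Algebra.trace ℚ K 1 = 2 := by
    have h := Algebra.trace_algebraMap (R := ℚ) (S := K) 1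
    rw [map_one] at h
    rw [h, hK]; norm_num
  -- trace is integer-valued on O
  have hint : ∀ x : O, ∃ n : ℤ, (n : ℚ) = Algebra.trace ℚ K (x : K) := by
    intro x
    have h1 : IsIntegral ℤ x := Algebra.IsIntegral.isIntegral x
    have h2 : IsIntegral ℤ ((x : K)) := h1.map (O.subtype.toIntAlgHom)
    have h3 : IsIntegral ℤ (Algebra.trace ℚ K (x : K)) := Algebra.isIntegral_trace h2
    obtain ⟨n, hn⟩ := IsIntegrallyClosed.isIntegral_iff.mp h3
    exact ⟨n, by simpa using hn⟩
  -- trace of integer multiples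
  have htr : ∀ (a : ℤ) (y : K),
      Algebra.trace ℚ K ((a : K) * y) = (a : ℚ) * Algebra.trace ℚ K y := by
    intro a y
    rw [show ((a : ℤ) : K) = algebraMap ℚ K ((a : ℤ) : ℚ) from (map_intCast _ a).symm,
      ← Algebra.smul_def, map_smul, smul_eq_mul]
  obtain ⟨n0, hn0⟩ := hint (b 0)
  obtain ⟨n1, hn1⟩ := hint (b 1)
  obtain ⟨m00, hm00⟩ := hint (b 0 * b 0)
  obtain ⟨m01, hm01⟩ := hint (b 0 * b 1)
  obtain ⟨m10, hm10⟩ := hint (b 1 * b 0)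
  obtain ⟨m11, hm11⟩ := hint (b 1 * b 1)
  have hcoe : ∀ i j : Fin 2, ((((b i) * (b j) : O)) : K) = (b i : K) * (b j : K) := by
    intro i j; push_cast; ring
  -- symmetry
  have hsymm : m01 = m10 := by
    have : (m01 : ℚ) = (m10 : ℚ) := by
      rw [hm01, hm10, hcoe, hcoe, mul_comm]
    exact_mod_cast this
  -- determinant
  have hdet : d = m00 * m11 - m01 * m10 := by
    have : (d : ℚ) = (m00 : ℚ) * m11 - (m01 : ℚ) * m10 := by
      rw [hd, Matrix.det_fin_two]
      simp only [Matrix.of_apply]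
      rw [← hcoe 0 0, ← hcoe 1 1, ← hcoe 0 1, ← hcoe 1 0, ← hm00, ← hm11, ← hm01, ← hm10]
    exact_mod_cast this
  -- decomposition of elements of O in K
  have hdec : ∀ x : O, (x : K)
      = ((b.repr x 0 : ℤ) : K) * (b 0 : K) + ((b.repr x 1 : ℤ) : K) * (b 1 : K) := by
    intro x
    have hx : (b.repr x 0) • b 0 + (b.repr x 1) • b 1 = x := by
      have h := b.sum_repr x
      rwa [Fin.sum_univ_two] at h
    conv_lhs => rw [← hx]
    push_cast [zsmul_eq_mul]
    ring
  -- trace formula for elements of O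
  have hrepr : ∀ x : O, Algebra.trace ℚ K (x : K)
      = ((b.repr x 0 : ℤ) : ℚ) * (n0 : ℚ) + ((b.repr x 1 : ℤ) : ℚ) * (n1 : ℚ) := by
    intro x
    rw [hdec x, map_add, htr, htr, hn0, hn1]
  set c0 : ℤ := b.repr 1 0 with hc0def
  set c1 : ℤ := b.repr 1 1 with hc1def
  -- 2 = c0 n0 + c1 n1
  have hC : (2 : ℤ) = c0 * n0 + c1 * n1 := by
    have h := hrepr 1
    rw [OneMemClass.coe_one, hT1] at h
    exact_mod_cast h
  -- n j = c0 m0j + c1 m1j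
  have h1K : (1 : K) = (c0 : K) * (b 0 : K) + (c1 : K) * (b 1 : K) := by
    have := hdec 1
    rwa [OneMemClass.coe_one] at this
  have hB : ∀ (j : Fin 2) (nj m0j m1j : ℤ),
      ((nj : ℚ) = Algebra.trace ℚ K (b j : K)) →
      ((m0j : ℚ) = Algebra.trace ℚ K ((b 0 : K) * (b j : K))) →
      ((m1j : ℚ) = Algebra.trace ℚ K ((b 1 : K) * (b j : K))) →
      nj = c0 * m0j + c1 * m1j := by
    intro j nj m0j m1j hnj hm0j hm1j
    have hbj : (b j : K) = (c0 : K) * ((b 0 : K) * (b j : K))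
        + (c1 : K) * ((b 1 : K) * (b j : K)) := by
      conv_lhs => rw [← one_mul ((b j : K)), h1K]
      ring
    have : (nj : ℚ) = (c0 : ℚ) * m0j + (c1 : ℚ) * m1j := by
      rw [hnj, hbj, map_add, htr, htr, ← hm0j, ← hm1j]
    exact_mod_cast this
  have hB0 : n0 = c0 * m00 + c1 * m10 :=
    hB 0 n0 m00 m10 (by rw [hn0]) (by rw [hm00, hcoe]) (by rw [hm10, hcoe])
  have hB1 : n1 = c0 * m01 + c1 * m11 :=
    hB 1 n1 m01 m11 (by rw [hn1]) (by rw [hm01, hcoe]) (by rw [hm11, hcoe])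
  -- c not both even
  have hcodd : ¬ (Even c0 ∧ Even c1) := by
    rintro ⟨⟨a, ha⟩, ⟨e, he⟩⟩
    have hn0e : Even n0 := ⟨a * m00 + e * m10, by rw [hB0, ha, he]; ring⟩
    have hn1e : Even n1 := ⟨a * m01 + e * m11, by rw [hB1, ha, he]; ring⟩
    obtain ⟨u, hu⟩ := hn0e
    obtain ⟨v, hv⟩ := hn1e
    have h4 : (2 : ℤ) = 4 * (a * u + e * v) := by
      linear_combination hC + (a + a) * hu + (e + e) * hv + n0 * ha + n1 * he
    omega
  -- key parity equivalence: Even d ↔ both n even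
  have hkey : Even d ↔ (Even n0 ∧ Even n1) := by
    rw [int_even_iff_cast, int_even_iff_cast, int_even_iff_cast]
    have hc : ¬((c0 : ZMod 2) = 0 ∧ (c1 : ZMod 2) = 0) := by
      rw [← int_even_iff_cast, ← int_even_iff_cast]; exact hcodd
    have h2' : (c0 : ZMod 2) * ((c0:ZMod 2)*(m00:ZMod 2) + (c1:ZMod 2)*(m01:ZMod 2))
        + (c1 : ZMod 2) * ((c0:ZMod 2)*(m01:ZMod 2) + (c1:ZMod 2)*(m11:ZMod 2)) = 0 := by
      have : ((2 : ℤ) : ZMod 2) = ((c0 * (c0 * m00 + c1 * m01)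
          + c1 * (c0 * m01 + c1 * m11) : ℤ) : ZMod 2) := by
        rw [show c0 * (c0 * m00 + c1 * m01) + c1 * (c0 * m01 + c1 * m11)
            = c0 * n0 + c1 * n1 by
              rw [hB0, hB1]; linear_combination (c0 * c1) * hsymm, ← hC]
      push_cast at this
      rw [← this]
      decide
    have hcore := zmod_core (m00 : ZMod 2) (m01 : ZMod 2) (m11 : ZMod 2)
      (c0 : ZMod 2) (c1 : ZMod 2) hc h2'
    have hd2 : (d : ZMod 2) = (m00:ZMod 2)*(m11:ZMod 2) - (m01:ZMod 2)*(m01:ZMod 2) := by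
      rw [hdet, ← hsymm]; push_cast; ring
    have hn02 : (n0 : ZMod 2) = (c0:ZMod 2)*(m00:ZMod 2) + (c1:ZMod 2)*(m01:ZMod 2) := by
      rw [hB0, hsymm]; push_cast; ring
    have hn12 : (n1 : ZMod 2) = (c0:ZMod 2)*(m01:ZMod 2) + (c1:ZMod 2)*(m11:ZMod 2) := by
      rw [hB1]; push_cast; ring
    rw [hd2, hn02, hn12]
    exact hcore
  -- image characterization
  have himg : (Algebra.trace ℚ K) '' (O : Set K)
      = {q : ℚ | ∃ a0 a1 : ℤ, q = a0 * n0 + a1 * n1} := by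
    ext q
    constructor
    · rintro ⟨x, hx, rfl⟩
      exact ⟨b.repr ⟨x, hx⟩ 0, b.repr ⟨x, hx⟩ 1, hrepr ⟨x, hx⟩⟩
    · rintro ⟨a0, a1, rfl⟩
      refine ⟨(a0 : K) * (b 0 : K) + (a1 : K) * (b 1 : K), ?_, ?_⟩
      · exact add_mem (mul_mem (intCast_mem O a0) (SetLike.coe_mem (b 0)))
          (mul_mem (intCast_mem O a1) (SetLike.coe_mem (b 1)))
      · rw [map_add, htr, htr, hn0, hn1]
  -- endgame
  have hP2 : (Even n0 ∧ Even n1) →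
      (Algebra.trace ℚ K) '' (O : Set K) = Set.range (fun m : ℤ => ((2 * m : ℤ) : ℚ)) := by
    rintro ⟨⟨u, hu⟩, ⟨v, hv⟩⟩
    rw [himg]
    ext q
    constructor
    · rintro ⟨a0, a1, rfl⟩
      exact ⟨a0 * u + a1 * v, by push_cast [hu, hv]; ring⟩
    · rintro ⟨m, rfl⟩
      refine ⟨m * c0, m * c1, ?_⟩
      have h2q : (2 : ℚ) = (c0 : ℚ) * n0 + (c1 : ℚ) * n1 := by exact_mod_cast hC
      show ((2 * m : ℤ) : ℚ) = _
      push_cast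
      linear_combination (m : ℚ) * h2q
  have hP1 : ¬(Even n0 ∧ Even n1) →
      (Algebra.trace ℚ K) '' (O : Set K) = Set.range (fun m : ℤ => (m : ℚ)) := by
    intro hP
    have hg1 : IsCoprime n0 n1 := by
      rw [Int.isCoprime_iff_gcd_eq_one]
      have hdvd : (Int.gcd n0 n1 : ℤ) ∣ 2 := by
        rw [hC]
        exact dvd_add (Dvd.dvd.mul_left (Int.gcd_dvd_left n0 n1) c0)
          (Dvd.dvd.mul_left (Int.gcd_dvd_right n0 n1) c1)
      have hodd : ¬ (2 : ℤ) ∣ (Int.gcd n0 n1 : ℤ) := by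
        intro h2g
        exact hP ⟨(even_iff_two_dvd).2 (h2g.trans (Int.gcd_dvd_left n0 n1)),
          (even_iff_two_dvd).2 (h2g.trans (Int.gcd_dvd_right n0 n1))⟩
      have hle : (Int.gcd n0 n1 : ℤ) ≤ 2 := Int.le_of_dvd (by norm_num) hdvd
      have hpos : 0 < (Int.gcd n0 n1 : ℤ) := by
        rcases Nat.eq_zero_or_pos (Int.gcd n0 n1) with h | h
        · exfalso
          rw [h] at hdvd; norm_num at hdvd
        · exact_mod_cast h
      interval_cases h : (Int.gcd n0 n1 : ℤ)
      · exact_mod_cast h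
      · exact absurd dvd_rfl hodd
    obtain ⟨a, e, hae⟩ := hg1
    rw [himg]
    ext q
    constructor
    · rintro ⟨a0, a1, rfl⟩
      exact ⟨a0 * n0 + a1 * n1, by push_cast; ring⟩
    · rintro ⟨m, rfl⟩
      refine ⟨m * a, m * e, ?_⟩
      have h1q : (1 : ℚ) = (a : ℚ) * n0 + (e : ℚ) * n1 := by exact_mod_cast hae.symm
      show ((m : ℤ) : ℚ) = _
      push_cast
      linear_combination (m : ℚ) * h1q
  -- the two ranges are distinct facts
  have hone : (1 : ℚ) ∈ Set.range (fun m : ℤ => (m : ℚ)) := ⟨1, by norm_num⟩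
  have hone2 : (1 : ℚ) ∉ Set.range (fun m : ℤ => ((2 * m : ℤ) : ℚ)) := by
    rintro ⟨m, hm⟩
    have hm' : ((2 * m : ℤ) : ℚ) = 1 := hm
    have : (2 * m : ℤ) = 1 := by exact_mod_cast hm'
    omega
  have hPimg : ¬(Even n0 ∧ Even n1) ↔
      (Algebra.trace ℚ K) '' (O : Set K) = Set.range (fun m : ℤ => (m : ℚ)) := by
    constructor
    · exact hP1
    · intro himg1 hP
      rw [hP2 hP] at himg1
      rw [← himg1] at hone
      exact hone2 hone
  constructor
  · rw [Int.not_even_iff_odd.symm, hkey.not, hPimg]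
  · rw [hkey]
    constructor
    · exact hP2
    · intro himg2
      by_contra hP
      rw [hP1 hP] at himg2
      rw [himg2] at hone
      exact hone2 hone
end
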